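/- Assume n > 0 or m > 2. The structure 𝔄 has no polymorphism t of arity m^{2^n} satisfying t(a, n, n, ..., n) = t(n, a, n, ..., n) = ⋯ = t(n, ..., n, a) = n (where in each tuple a occurs exactly once and all other coordinates equal n). -/
import Mathlib


/- The universe `A = {a, 0, 1, ..., n}` of size `n+2` is encoded as `Fin (n+2)`,
where `a` is encoded as `0` and the element `i ∈ {0, ..., n}` is encoded as `i+1`;
this encoding is order-preserving for the order `a < 0 < 1 < ⋯ < n`. -/

/-- A `k`-ary operation `t` is compatible with (preserves) an `r`-ary relation `S`:
applying `t` coordinatewise to `k` tuples from `S` yields a tuple in `S`. -/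
def Compat {A : Type*} {k r : ℕ} (t : (Fin k → A) → A) (S : Set (Fin r → A)) : Prop :=
  ∀ u : Fin k → Fin r → A, (∀ j, u j ∈ S) → (fun i => t fun j => u j i) ∈ S

/-- Compatibility with a unary relation `X`: `t` maps `X^k` into `X`. -/
def CompatUnary {A : Type*} {k : ℕ} (t : (Fin k → A) → A) (X : Set A) : Prop :=
  ∀ u : Fin k → A, (∀ j, u j ∈ X) → t u ∈ X

/-- Compatibility with a binary relation, given as a set of pairs. -/
def Compat2 {A : Type*} {k : ℕ} (t : (Fin k → A) → A) (S : Set (A × A)) : Prop :=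
  ∀ u w : Fin k → A, (∀ j, (u j, w j) ∈ S) → (t u, t w) ∈ S

/-- An operation `t : A^k → A` is a near-unanimity (NU) operation if `k ≥ 3` and
any tuple whose coordinates all equal `x` except possibly one coordinate (with
value `y`) is mapped to the majority value `x`. -/
def IsNU {A : Type*} {k : ℕ} (t : (Fin k → A) → A) : Prop :=
  3 ≤ k ∧ ∀ (x y : A) (j : Fin k), t (Function.update (fun _ => x) j y) = x

/-- The `(m+1)`-ary relation `S_i`: all tuples `(x_0, …, x_m)` with
`x_0 ∈ {a,0,…,i-1}` (encoded value `≤ i`) and `x_1, …, x_m ∈ {a, i}` (encoded value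
`0` or `i+1`), except the tuple `(a, i, …, i)`, together with the constant tuples
`(j, …, j)` for `j ∈ {i+1, …, n}` (encoded value `≥ i+2`). -/
def Srel (n m i : ℕ) : Set (Fin (m + 1) → Fin (n + 2)) :=
  {x | ((x 0).val ≤ i ∧ (∀ j, j ≠ 0 → ((x j).val = 0 ∨ (x j).val = i + 1)) ∧
          ¬((x 0).val = 0 ∧ ∀ j, j ≠ 0 → (x j).val = i + 1)) ∨
        (∃ c : Fin (n + 2), i + 2 ≤ c.val ∧ ∀ j, x j = c)}

/-- A polymorphism of the structure `𝔄 = (A; S_0, …, S_n, (X)_{∅ ≠ X ⊆ A})`: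
an operation compatible with each `S_i` and with every nonempty unary relation. -/
def PolyA (n m : ℕ) {k : ℕ} (t : (Fin k → Fin (n + 2)) → Fin (n + 2)) : Prop :=
  (∀ i ≤ n, Compat t (Srel n m i)) ∧
  (∀ X : Set (Fin (n + 2)), X.Nonempty → CompatUnary t X)

private lemma sum_two_pow (n : ℕ) : (∑ i ∈ Finset.range n, 2 ^ i) + 1 = 2 ^ n := by
  induction n with
  | zero => simp
  | succ n ih =>
    rw [Finset.sum_range_succ, pow_succ]
    omega

private lemma split_finset {α : Type*} [DecidableEq α] :
    ∀ (m : ℕ), m ≠ 0 → ∀ (c : ℕ) (S : Finset α), S.card ≤ m * c →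
      ∃ f : α → Fin m, ∀ q, (S.filter (fun x => f x = q)).card ≤ c := by
  intro m
  induction m with
  | zero => intro h; exact absurd rfl h
  | succ M ih =>
    intro _ c S hS
    by_cases hc : S.card ≤ c
    · exact ⟨fun _ => 0, fun q => le_trans (Finset.card_filter_le _ _) hc⟩
    · push_neg at hc
      obtain ⟨T, hTS, hTc⟩ := Finset.exists_subset_card_eq hc.le
      have hS' : (S \ T).card ≤ M * c := by
        rw [Finset.card_sdiff_of_subset hTS, hTc]
        have h2 : (M + 1) * c = M * c + c := by ring
        omega
      by_cases hM : M = 0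
      · subst hM
        simp only [Nat.reduceAdd, one_mul] at hS
        omega
      · obtain ⟨f', hf'⟩ := ih hM c (S \ T) hS'
        refine ⟨fun x => if x ∈ T then 0 else (f' x).succ, fun q => ?_⟩
        rcases Fin.eq_zero_or_eq_succ q with rfl | ⟨r, rfl⟩
        · refine le_trans (Finset.card_le_card ?_) (le_of_eq hTc)
          intro x hx
          simp only [Finset.mem_filter] at hx
          by_contra hxT
          rw [if_neg hxT] at hx
          exact Fin.succ_ne_zero _ hx.2
        · refine le_trans (Finset.card_le_card ?_) (hf' r)
          intro x hx
          simp only [Finset.mem_filter] at hx ⊢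
          obtain ⟨hxS, hxq⟩ := hx
          by_cases hxT : x ∈ T
          · rw [if_pos hxT] at hxq
            exact absurd hxq.symm (Fin.succ_ne_zero r)
          · rw [if_neg hxT] at hxq
            exact ⟨Finset.mem_sdiff.mpr ⟨hxS, hxT⟩, Fin.succ_injective _ hxq⟩

/-- For `n > 0` or `m > 2`, the structure `𝔄` has no polymorphism `t` of arity
`m^(2^n)` satisfying `t(a, n, …, n) = t(n, a, n, …, n) = ⋯ = t(n, …, n, a) = n`
(where `n` is encoded as `Fin.last (n+1)` and `a` as `0`). -/
theorem stmt8 (n m : ℕ) (hm : 2 ≤ m) (hnm : 0 < n ∨ 2 < m) :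
    ¬ ∃ t : (Fin (m ^ 2 ^ n) → Fin (n + 2)) → Fin (n + 2), PolyA n m t ∧
      ∀ j : Fin (m ^ 2 ^ n),
        t (Function.update (fun _ => Fin.last (n + 1)) j 0) = Fin.last (n + 1) := by
  rintro ⟨t, ⟨hS, hU⟩, hId⟩
  have hm0 : m ≠ 0 := by omega
  have hk0 : 0 < m ^ 2 ^ n := pow_pos (by omega) _
  -- basic consequences of unary compatibility
  have hconst : ∀ c : Fin (n + 2), t (fun _ => c) = c := by
    intro c
    have := hU {c} ⟨c, rfl⟩ (fun _ => c) (fun _ => rfl)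
    simpa using this
  have hrange : ∀ w : Fin (m ^ 2 ^ n) → Fin (n + 2), ∃ i, t w = w i := by
    intro w
    have hne : (Set.range w).Nonempty := ⟨w ⟨0, hk0⟩, ⟨_, rfl⟩⟩
    obtain ⟨i, hi⟩ := hU (Set.range w) hne w (fun j => ⟨j, rfl⟩)
    exact ⟨i, hi.symm⟩
  -- the main kill lemma, by induction along a binary counter of value profiles
  have main : ∀ d : ℕ, ∀ V : Finset ℕ, (∀ v ∈ V, v ≤ n) →
      (∑ v ∈ V, 2 ^ v) + d = 2 ^ n →
      ∀ w : Fin (m ^ 2 ^ n) → Fin (n + 2),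
      (∀ i, w i = 0 ∨ ∃ v ∈ V, (w i).val = v + 1) →
      (Finset.univ.filter (fun i => w i = 0)).card ≤ m ^ d →
      t w ≠ 0 := by
    intro d
    induction d with
    | zero =>
      intro V hVn hsum w hw hcard
      -- V = {n}
      have h1 : 1 ≤ 2 ^ n := Nat.one_le_two_pow
      have hnV : n ∈ V := by
        by_contra hn
        have hsub : V ⊆ Finset.range n := by
          intro v hv
          have := hVn v hv
          have : v ≠ n := fun h => hn (h ▸ hv)
          simp only [Finset.mem_range]
          omega
        have hle : (∑ v ∈ V, 2 ^ v) ≤ ∑ v ∈ Finset.range n, 2 ^ v :=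
          Finset.sum_le_sum_of_subset hsub
        have := sum_two_pow n
        omega
      have hVval : ∀ i, w i = 0 ∨ (w i).val = n + 1 := by
        intro i
        rcases hw i with h | ⟨v, hvV, hval⟩
        · exact Or.inl h
        · right
          -- v = n, else sum too big
          have hv : v = n := by
            by_contra hvn
            have hsub : ({v, n} : Finset ℕ) ⊆ V := by
              intro x hx
              simp only [Finset.mem_insert, Finset.mem_singleton] at hx
              rcases hx with rfl | rfl
              · exact hvV
              · exact hnV
            have hle : (∑ x ∈ ({v, n} : Finset ℕ), 2 ^ x) ≤ ∑ x ∈ V, 2 ^ x :=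
              Finset.sum_le_sum_of_subset hsub
            rw [Finset.sum_pair hvn] at hle
            have hv1 : 1 ≤ 2 ^ v := Nat.one_le_two_pow
            omega
          omega
      simp only [pow_zero] at hcard
      by_cases hA : ∃ i0, w i0 = 0
      · obtain ⟨i0, hi0⟩ := hA
        have huniq : ∀ i, w i = 0 → i = i0 := by
          intro i hi
          have h1 : i ∈ Finset.univ.filter (fun i => w i = 0) := by
            simp [hi]
          have h2 : i0 ∈ Finset.univ.filter (fun i => w i = 0) := by
            simp [hi0]
          exact Finset.card_le_one.mp hcard i h1 i0 h2
        have hweq : w = Function.update (fun _ => Fin.last (n + 1)) i0 0 := by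
          funext i
          by_cases hii : i = i0
          · subst hii
            rw [Function.update_self]
            exact hi0
          · rw [Function.update_of_ne hii]
            rcases hVval i with h | h
            · exact absurd (huniq i h) hii
            · exact Fin.ext h
        rw [hweq, hId i0]
        intro h
        have := congrArg Fin.val h
        simp [Fin.last] at this
      · push_neg at hA
        have hweq : w = fun _ => Fin.last (n + 1) := by
          funext i
          rcases hVval i with h | h
          · exact absurd h (hA i)
          · exact Fin.ext h
        rw [hweq, hconst]
        intro h
        have := congrArg Fin.val h
        simp [Fin.last] at this
    | succ d ih =>
      intro V hVn hsum w hw hcard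
      have h1 : 1 ≤ 2 ^ n := Nat.one_le_two_pow
      -- the least value not in V
      have hex : ∃ v, v ∉ V := ⟨n + 1, fun h => by have := hVn _ h; omega⟩
      set j := Nat.find hex with hjdef
      have hjP : j ∉ V := Nat.find_spec hex
      have hjmin : ∀ v, v < j → v ∈ V := by
        intro v hv
        by_contra hvV
        exact absurd (Nat.find_min' hex hvV) (by omega)
      have hjn : j ≤ n := by
        by_contra hgt
        push_neg at hgt
        have hsub : Finset.range (n + 1) ⊆ V := by
          intro v hv
          simp only [Finset.mem_range] at hv
          exact hjmin v (by omega)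
        have hle : (∑ v ∈ Finset.range (n + 1), 2 ^ v) ≤ ∑ v ∈ V, 2 ^ v :=
          Finset.sum_le_sum_of_subset hsub
        have hs1 := sum_two_pow (n + 1)
        have hs2 : 2 ^ (n + 1) = 2 ^ n * 2 := pow_succ 2 n
        omega
      -- the successor profile
      set V' := insert j (V.filter (fun v => j < v)) with hV'def
      have hV'n : ∀ v ∈ V', v ≤ n := by
        intro v hv
        rcases Finset.mem_insert.mp hv with rfl | hv'
        · exact hjn
        · exact hVn v (Finset.mem_filter.mp hv').1
      have hsum' : (∑ v ∈ V', 2 ^ v) + d = 2 ^ n := by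
        have hjnotin : j ∉ V.filter (fun v => j < v) := by
          simp
        have hins : (∑ v ∈ V', 2 ^ v) =
            2 ^ j + ∑ v ∈ V.filter (fun v => j < v), 2 ^ v :=
          Finset.sum_insert hjnotin
        have hdec := Finset.sum_filter_add_sum_filter_not V (fun v => v < j)
          (fun v => 2 ^ v)
        have hfeq : V.filter (fun v => ¬ v < j) = V.filter (fun v => j < v) := by
          ext v
          simp only [Finset.mem_filter]
          constructor
          · rintro ⟨h1', h2'⟩
            have : v ≠ j := fun h => hjP (h ▸ h1')
            exact ⟨h1', by omega⟩
          · rintro ⟨h1', h2'⟩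
            exact ⟨h1', by omega⟩
        have hflt : V.filter (fun v => v < j) = Finset.range j := by
          ext v
          simp only [Finset.mem_filter, Finset.mem_range]
          exact ⟨fun h => h.2, fun h => ⟨hjmin v h, h⟩⟩
        rw [hfeq, hflt] at hdec
        have hsr := sum_two_pow j
        omega
      -- split the a-set of w into m parts
      have hcard' : (Finset.univ.filter (fun i => w i = 0)).card ≤ m * m ^ d := by
        have : m ^ (d + 1) = m * m ^ d := by rw [pow_succ]; ring
        omega
      obtain ⟨g, hg⟩ := split_finset m hm0 (m ^ d)
        (Finset.univ.filter (fun i => w i = 0)) hcard'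
      -- the element j encoded
      set jelt : Fin (n + 2) := ⟨j + 1, by omega⟩ with hjelt
      -- the mates
      set mate : Fin m → Fin (m ^ 2 ^ n) → Fin (n + 2) := fun q i =>
        if w i = 0 then (if g i = q then 0 else jelt)
        else if (w i).val ≤ j then jelt else w i with hmate
      -- trichotomy for coordinates of w
      have htri : ∀ i, (w i = 0) ∨ (w i ≠ 0 ∧ (w i).val ≤ j) ∨ (j + 2 ≤ (w i).val) := by
        intro i
        rcases hw i with h | ⟨v, hvV, hval⟩
        · exact Or.inl h
        · have hvj : v ≠ j := fun h => hjP (h ▸ hvV)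
          have hne : w i ≠ 0 := by
            intro h
            rw [h] at hval
            simp at hval
          rcases lt_or_gt_of_ne hvj with hlt | hgt
          · exact Or.inr (Or.inl ⟨hne, by omega⟩)
          · exact Or.inr (Or.inr (by omega))
      -- the application
      set u : Fin (m ^ 2 ^ n) → Fin (m + 1) → Fin (n + 2) := fun i =>
        Fin.cons (w i) (fun q => mate q i) with hu
      have hrows : ∀ i, u i ∈ Srel n m j := by
        intro i
        rcases htri i with h0 | ⟨hne, hle⟩ | hhigh
        · -- w i = a : active row
          left
          refine ⟨?_, ?_, ?_⟩
          · simp only [hu, Fin.cons_zero, h0]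
            simp
          · intro p hp
            rcases Fin.eq_zero_or_eq_succ p with rfl | ⟨q, rfl⟩
            · exact absurd rfl hp
            · simp only [hu, Fin.cons_succ, hmate, if_pos h0]
              by_cases hgq : g i = q
              · rw [if_pos hgq]; left; simp
              · rw [if_neg hgq]; right; simp [hjelt]
          · rintro ⟨-, hall⟩
            have := hall (Fin.succ (g i)) (Fin.succ_ne_zero _)
            simp only [hu, Fin.cons_succ, hmate, if_pos h0, if_pos rfl] at this
            simp at this
        · -- 0 < val w i ≤ j : active row
          left
          refine ⟨?_, ?_, ?_⟩
          · simpa only [hu, Fin.cons_zero] using hle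
          · intro p hp
            rcases Fin.eq_zero_or_eq_succ p with rfl | ⟨q, rfl⟩
            · exact absurd rfl hp
            · simp only [hu, Fin.cons_succ, hmate, if_neg hne, if_pos hle]
              right; simp [hjelt]
          · rintro ⟨h0, -⟩
            simp only [hu, Fin.cons_zero] at h0
            exact hne (Fin.ext h0)
        · -- high value : constant row
          right
          refine ⟨w i, by omega, ?_⟩
          intro p
          rcases Fin.eq_zero_or_eq_succ p with rfl | ⟨q, rfl⟩
          · simp [hu]
          · have hne : w i ≠ 0 := by
              intro h
              rw [h] at hhigh
              simp at hhigh
            simp only [hu, Fin.cons_succ, hmate, if_neg hne, if_neg (by omega : ¬ (w i).val ≤ j)]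
      have hout := hS j hjn u hrows
      -- the mates are not sent to a
      have hmate_ne : ∀ q, t (mate q) ≠ 0 := by
        intro q
        refine ih V' hV'n hsum' (mate q) ?_ ?_
        · intro i
          rcases htri i with h0 | ⟨hne, hle⟩ | hhigh
          · by_cases hgq : g i = q
            · left; simp [hmate, h0, hgq]
            · right
              refine ⟨j, Finset.mem_insert_self _ _, ?_⟩
              simp [hmate, h0, hgq, hjelt]
          · right
            refine ⟨j, Finset.mem_insert_self _ _, ?_⟩
            simp [hmate, hne, hle, hjelt]
          · rcases hw i with h | ⟨v, hvV, hval⟩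
            · rw [h] at hhigh; simp at hhigh
            · right
              refine ⟨v, ?_, ?_⟩
              · refine Finset.mem_insert.mpr (Or.inr ?_)
                refine Finset.mem_filter.mpr ⟨hvV, by omega⟩
              · have hne : w i ≠ 0 := by
                  intro h
                  rw [h] at hhigh
                  simp at hhigh
                simp only [hmate, if_neg hne, if_neg (by omega : ¬ (w i).val ≤ j)]
                exact hval
        · have hfe : Finset.univ.filter (fun i => mate q i = 0) =
              (Finset.univ.filter (fun i => w i = 0)).filter (fun i => g i = q) := by
            rw [Finset.filter_filter]
            ext i
            simp only [Finset.mem_filter, Finset.mem_univ, true_and]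
            constructor
            · intro h
              rcases htri i with h0 | ⟨hne, hle⟩ | hhigh
              · by_cases hgq : g i = q
                · exact ⟨h0, hgq⟩
                · rw [hmate] at h
                  simp only [if_pos h0, if_neg hgq] at h
                  exact absurd (congrArg Fin.val h) (by simp [hjelt])
              · rw [hmate] at h
                simp only [if_neg hne, if_pos hle] at h
                exact absurd (congrArg Fin.val h) (by simp [hjelt])
              · have hne : w i ≠ 0 := by
                  intro hh
                  rw [hh] at hhigh
                  simp at hhigh
                rw [hmate] at h
                simp only [if_neg hne, if_neg (by omega : ¬ (w i).val ≤ j)] at h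
                exact absurd h hne
            · rintro ⟨h0, hgq⟩
              simp [hmate, h0, hgq]
          rw [hfe]
          exact hg q
      -- conclude
      intro htw
      have hcol0 : (fun i => u i 0) = w := funext fun i => by simp [hu]
      have hcolq : ∀ q : Fin m, (fun i => u i q.succ) = mate q :=
        fun q => funext fun i => by simp [hu]
      rcases hout with ⟨hx0, hxp, hexc⟩ | ⟨c, hc, hcall⟩
      · refine hexc ⟨?_, ?_⟩
        · show (t (fun i => u i 0)).val = 0
          rw [hcol0, htw, Fin.val_zero]
        · intro p hp
          rcases Fin.eq_zero_or_eq_succ p with rfl | ⟨q, rfl⟩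
          · exact absurd rfl hp
          · have hval : (t (fun i => u i q.succ)).val = 0 ∨
                (t (fun i => u i q.succ)).val = j + 1 := hxp q.succ hp
            show (t (fun i => u i q.succ)).val = j + 1
            rcases hval with h | h
            · rw [hcolq q] at h
              exact absurd (Fin.ext (by simpa using h)) (hmate_ne q)
            · exact h
      · have hc0 : t (fun i => u i 0) = c := hcall 0
        rw [hcol0, htw] at hc0
        rw [← hc0] at hc
        simp at hc
  -- final contradiction
  have h1 : 1 ≤ 2 ^ n := Nat.one_le_two_pow
  have hkcard : (Finset.univ : Finset (Fin (m ^ 2 ^ n))).card ≤ m * m ^ (2 ^ n - 1) := by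
    rw [Finset.card_univ, Fintype.card_fin]
    have : m ^ 2 ^ n = m * m ^ (2 ^ n - 1) := by
      conv_lhs => rw [show 2 ^ n = (2 ^ n - 1) + 1 by omega]
      rw [pow_succ]
      ring
    omega
  obtain ⟨g, hg⟩ := split_finset m hm0 (m ^ (2 ^ n - 1)) Finset.univ hkcard
  set vv : Fin m → Fin (m ^ 2 ^ n) → Fin (n + 2) := fun q i =>
    if g i = q then 0 else ⟨1, by omega⟩ with hvv
  have hvq : ∀ q, t (vv q) = ⟨1, by omega⟩ := by
    intro q
    have hne : t (vv q) ≠ 0 := by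
      refine main (2 ^ n - 1) {0} (by simp) ?_ (vv q) ?_ ?_
      · simp only [Finset.sum_singleton, pow_zero]
        omega
      · intro i
        by_cases hgq : g i = q
        · left; simp [hvv, hgq]
        · right
          exact ⟨0, Finset.mem_singleton_self 0, by simp [hvv, hgq]⟩
      · have hfe : Finset.univ.filter (fun i => vv q i = 0) =
            Finset.univ.filter (fun i => g i = q) := by
          ext i
          simp only [Finset.mem_filter, Finset.mem_univ, true_and, hvv]
          by_cases hgq : g i = q
          · simp [hgq]
          · simp only [if_neg hgq]
            constructor
            · intro h
              exact absurd (congrArg Fin.val h) (by simp)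
            · intro h
              exact absurd h hgq
        rw [hfe]
        exact hg q
    obtain ⟨i, hi⟩ := hrange (vv q)
    rw [hi]
    by_cases hgq : g i = q
    · exfalso
      apply hne
      rw [hi]
      simp [hvv, hgq]
    · simp [hvv, hgq]
  set u : Fin (m ^ 2 ^ n) → Fin (m + 1) → Fin (n + 2) := fun i =>
    Fin.cons 0 (fun q => vv q i) with hu
  have hrows : ∀ i, u i ∈ Srel n m 0 := by
    intro i
    left
    refine ⟨?_, ?_, ?_⟩
    · simp [hu]
    · intro p hp
      rcases Fin.eq_zero_or_eq_succ p with rfl | ⟨q, rfl⟩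
      · exact absurd rfl hp
      · simp only [hu, Fin.cons_succ, hvv]
        by_cases hgq : g i = q
        · left; simp [hgq]
        · right; simp [hgq]
    · rintro ⟨-, hall⟩
      have := hall (Fin.succ (g i)) (Fin.succ_ne_zero _)
      simp only [hu, Fin.cons_succ, hvv, if_pos rfl] at this
      simp at this
  have hout := hS 0 (Nat.zero_le n) u hrows
  have hcol0 : (fun i => u i 0) = (fun _ => (0 : Fin (n + 2))) :=
    funext fun i => by simp [hu]
  have hcolq : ∀ q : Fin m, (fun i => u i q.succ) = vv q :=
    fun q => funext fun i => by simp [hu]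
  rcases hout with ⟨hx0, hxp, hexc⟩ | ⟨c, hc, hcall⟩
  · refine hexc ⟨?_, ?_⟩
    · show (t (fun i => u i 0)).val = 0
      rw [hcol0, hconst, Fin.val_zero]
    · intro p hp
      rcases Fin.eq_zero_or_eq_succ p with rfl | ⟨q, rfl⟩
      · exact absurd rfl hp
      · show (t (fun i => u i q.succ)).val = 0 + 1
        rw [hcolq q, hvq q]
  · have hc0 : t (fun i => u i 0) = c := hcall 0
    rw [hcol0, hconst] at hc0
    rw [← hc0] at hc
    simp at hc
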